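/- A Dyck word w lies in the image of the standard RPF natural spelling function γ if and only if ")())" is not a substring of w and ")()" is not a suffix of w. -/

import Mathlib

/-!
For `n ≥ 2`, `γ n` is the concatenation of the blocks `(γ e)` over the exponents `e` of
`2, 3, 5, …` up to the greatest prime factor of `n`, and every list of exponents whose last entry
is nonzero arises this way. Hence the range of `γ` is the least set of words that contains `ε` and
contains `(x)y` whenever it contains `x` and `y` and `y ≠ ()`; the condition `y ≠ ()` says that
the last exponent is nonzero.

A nonempty Dyck word factors as `(x)y` with `x`, `y` Dyck, and `(x)y` avoids the factor `)())`
and the suffix `)()` iff `x` and `y` do and `y ≠ ()`: a forbidden factor meeting the `)` after `x`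
would make `x` end in `)()`, or `y` start with `)` or `())`, which a Dyck word does not. Induction
on this factorization identifies the two sets of words.
-/

/-- A Dyck word over {(,)}, encoded as `List Bool` with `true` = '(' and `false` = ')'. -/
def IsDyck (w : List Bool) : Prop :=
  (∀ k, (w.take k).count false ≤ (w.take k).count true) ∧
    w.count true = w.count false

/-- The standard RPF natural spelling function.  `true` = '(' and `false` = ')'.
For `n ≥ 2`, `γ n` is the concatenation over `i = 0, …, m-1` of `"(" ++ γ aᵢ ++ ")"`,
where `aᵢ` is the exponent of the `i`-th prime (`Nat.nth Nat.Prime i`, 0-indexed, so the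
0th prime is 2) in the factorization of `n`, and the `(m-1)`-st prime is the greatest
prime factor of `n` (so `m = Nat.count Nat.Prime (gpf n) + 1`). -/
noncomputable def gamma : ℕ → List Bool
  | 0 => []
  | 1 => [true, false]
  | (n+2) =>
    ((List.range (Nat.count Nat.Prime ((n+2).factorization.support.sup id) + 1)).map
      (fun i => (true :: gamma ((n+2).factorization (Nat.nth Nat.Prime i))) ++ [false])).flatten
termination_by n => n
decreasing_by exact Nat.factorization_lt _ (by omega)

section Words

open List

inductive IsBalanced : List Bool → Prop
  | nil : IsBalanced []
  | node {x y : List Bool} : IsBalanced x → IsBalanced y → IsBalanced (true :: x ++ false :: y)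

namespace IsBalanced

variable {w : List Bool}

theorem not_false_prefix (hw : IsBalanced w) : ¬ [false] <+: w := by
  cases hw <;> simp

theorem not_true_false_false_prefix (hw : IsBalanced w) : ¬ [true, false, false] <+: w := by
  cases hw with
  | nil => simp
  | node hx hy =>
    cases hx with
    | nil => simpa using hy.not_false_prefix
    | node => simp

theorem not_true_suffix (hw : IsBalanced w) : ¬ [true] <:+ w := by
  induction hw with
  | nil => simp
  | @node x y _ _ _ ihy =>
    intro h
    rcases suffix_cons_iff.mp (suffix_of_suffix_length_le h (suffix_append _ _) (by simp))
      with h | h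
    · simp at h
    · exact ihy h

theorem three_le_length (hw : IsBalanced w) (h0 : w ≠ []) (h1 : w ≠ [true, false]) :
    3 ≤ w.length := by
  cases hw with
  | nil => exact absurd rfl h0
  | @node x y _ _ =>
    have : x.length + y.length ≠ 0 := fun h => h1 (by simp_all)
    simp only [length_cons, length_append]
    omega

end IsBalanced

def DyckStep.ofBool : Bool → DyckStep
  | true => DyckStep.U
  | false => DyckStep.D

def DyckStep.toBool (s : DyckStep) : Bool := s = DyckStep.U

theorem DyckStep.ofBool_injective : Function.Injective DyckStep.ofBool := by
  decide

theorem DyckStep.toBool_comp_ofBool : DyckStep.toBool ∘ DyckStep.ofBool = id := by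
  funext b
  cases b <;> rfl

def IsDyck.toDyckWord {w : List Bool} (hw : IsDyck w) : DyckWord where
  toList := w.map DyckStep.ofBool
  count_U_eq_count_D := by
    have count_map := count_map_of_injective w _ DyckStep.ofBool_injective
    exact (count_map true).trans (hw.2.trans (count_map false).symm)
  count_D_le_count_U k := by
    have count_map := count_map_of_injective (w.take k) _ DyckStep.ofBool_injective
    rw [← map_take]
    exact (count_map false).trans_le ((hw.1 k).trans_eq (count_map true).symm)

theorem DyckWord.isBalanced_map_toBool (p : DyckWord) :
    IsBalanced (p.toList.map DyckStep.toBool) := by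
  rw [← p.ofTree_toTree]
  generalize p.toTree = t
  induction t with
  | nil => exact .nil
  | node _ l r ihl ihr =>
    change IsBalanced ((([DyckStep.U] ++ (DyckWord.ofTree l).toList ++ [DyckStep.D]) ++
      (DyckWord.ofTree r).toList).map DyckStep.toBool)
    simpa [DyckStep.toBool] using ihl.node ihr

theorem IsDyck.isBalanced {w : List Bool} (hw : IsDyck w) : IsBalanced w := by
  simpa only [IsDyck.toDyckWord, map_map, DyckStep.toBool_comp_ofBool, map_id] using
    hw.toDyckWord.isBalanced_map_toBool

def AvoidsPatterns (w : List Bool) : Prop :=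
  ¬ [false, true, false, false] <:+: w ∧ ¬ [false, true, false] <:+ w

namespace AvoidsPatterns

variable {x y : List Bool}

theorem of_node (h : AvoidsPatterns (true :: x ++ false :: y)) :
    AvoidsPatterns x ∧ AvoidsPatterns y ∧ y ≠ [true, false] := by
  obtain ⟨hinf, hsuf⟩ := h
  have hy : y <:+ true :: x ++ false :: y := ⟨true :: x ++ [false], by simp⟩
  refine ⟨⟨fun h => hinf (h.trans ⟨[true], false :: y, by simp⟩), ?_⟩,
    ⟨fun h => hinf (h.trans hy.isInfix), fun h => hsuf (h.trans hy)⟩, ?_⟩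
  · rintro ⟨z, rfl⟩
    exact hinf ⟨true :: z, y, by simp⟩
  · rintro rfl
    exact hsuf ⟨true :: x, by simp⟩

theorem node (hx : AvoidsPatterns x) (hy : AvoidsPatterns y) (hbx : IsBalanced x)
    (hby : IsBalanced y) (hne : y ≠ [true, false]) :
    AvoidsPatterns (true :: x ++ false :: y) := by
  refine ⟨fun h => ?_, fun h => ?_⟩
  · replace h : [false, true, false, false] <:+: x ++ false :: y := by
      simpa [infix_cons_iff] using h
    rcases infix_append_iff_ne_nil.mp h with h | h | ⟨s, t, hs, ht, hst, hsx, hty⟩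
    · exact hx.1 h
    · rcases infix_cons_iff.mp h with h | h
      · exact hby.not_true_false_false_prefix (by simpa using h)
      · exact hy.1 h
    · -- `)())` split between the end of `x` and the start of `)y`
      rcases s with _ | ⟨a, _ | ⟨b, _ | ⟨c, _ | ⟨d, s⟩⟩⟩⟩ <;>
        simp only [ne_eq, not_true_eq_false, reduceCtorEq, not_false_eq_true, cons_append, nil_append,
          cons.injEq, Bool.false_eq, Bool.true_eq, nil_eq, append_eq_nil_iff, cons_ne_self] at hs hst
      · simp [← hst.2] at hty
      · simp only [← hst.2.2, cons_prefix_cons, true_and] at hty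
        exact hby.not_false_prefix hty
      · exact hx.2 (by simpa [hst.1, hst.2.1, hst.2.2.1] using hsx)
      · exact ht hst.2.2.2.2.2
  · rcases eq_or_ne y [] with rfl | hy0
    · replace h : [false, true] <:+ true :: x := by
        simpa using (suffix_append_inj_of_length_eq (l₁ := [false, true]) rfl).mp (by simpa using h)
      rcases suffix_cons_iff.mp h with h | h
      · simp at h
      · exact hbx.not_true_suffix ((suffix_cons _ _).trans h)
    · exact hy.2 (suffix_of_suffix_length_le h ⟨true :: x ++ [false], by simp⟩
        (by simpa using hby.three_le_length hy0 hne))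

end AvoidsPatterns

inductive IsSpelling : List Bool → Prop
  | nil : IsSpelling []
  | node {x y : List Bool} : IsSpelling x → IsSpelling y → y ≠ [true, false] →
      IsSpelling (true :: x ++ false :: y)

theorem isSpelling_iff_isBalanced_and_avoidsPatterns {w : List Bool} :
    IsSpelling w ↔ IsBalanced w ∧ AvoidsPatterns w := by
  constructor
  · intro h
    induction h with
    | nil => exact ⟨.nil, by simp [AvoidsPatterns]⟩
    | node _ _ hne ihx ihy => exact ⟨ihx.1.node ihy.1, .node ihx.2 ihy.2 ihx.1 ihy.1 hne⟩
  · rintro ⟨hb, ha⟩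
    induction hb with
    | nil => exact .nil
    | node _ _ ihx ihy =>
      obtain ⟨hax, hay, hne⟩ := ha.of_node
      exact .node (ihx hax) (ihy hay) hne

end Words

section Exponents

open Nat

noncomputable def primeExponents (n : ℕ) : List ℕ :=
  (List.range (count Nat.Prime (n.factorization.support.sup id) + 1)).map
    fun i => n.factorization (nth Nat.Prime i)

variable {n a : ℕ} {l : List ℕ}

theorem lt_of_mem_primeExponents (hn : n ≠ 0) (ha : a ∈ primeExponents n) : a < n := by
  obtain ⟨i, -, rfl⟩ := List.mem_map.mp ha
  exact factorization_lt _ hn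

theorem primeExponents_eq_append (hn : 2 ≤ n) :
    ∃ l a, a ≠ 0 ∧ primeExponents n = l ++ [a] := by
  obtain ⟨p, hp, hsup⟩ := Finset.exists_mem_eq_sup n.factorization.support
    (by simpa using Nat.nonempty_primeFactors.mpr hn) id
  refine ⟨_, _, ?_, by rw [primeExponents, List.range_succ, List.map_append, List.map_singleton]⟩
  rw [hsup, id, nth_count (prime_of_mem_primeFactors (by simpa using hp))]
  exact Finsupp.mem_support_iff.mp hp

theorem primeExponents_eq_of_factorization (ha : a ≠ 0)
    (hf : ∀ i, n.factorization (nth Nat.Prime i) = (l ++ [a]).getD i 0) :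
    primeExponents n = l ++ [a] := by
  have hlast : nth Nat.Prime l.length ∈ n.factorization.support :=
    Finsupp.mem_support_iff.mpr (by simp [hf, ha])
  obtain ⟨q, hq, hsup⟩ := Finset.exists_mem_eq_sup _ ⟨_, hlast⟩ id
  have hcount : count Nat.Prime (n.factorization.support.sup id) = l.length := by
    apply le_antisymm
    · have hq' : (l ++ [a]).getD (count Nat.Prime q) 0 ≠ 0 := by
        rw [← hf, nth_count (prime_of_mem_primeFactors (by simpa using hq))]
        exact Finsupp.mem_support_iff.mp hq
      have := mt (List.getD_eq_default (l ++ [a]) 0) hq'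
      simp only [hsup, id, List.length_append, List.length_singleton] at this ⊢
      omega
    · calc l.length = count Nat.Prime (nth Nat.Prime l.length) :=
            (count_nth_of_infinite infinite_setOfPred_prime _).symm
        _ ≤ _ := count_monotone _ (Finset.le_sup (f := id) hlast)
  rw [primeExponents, hcount]
  refine List.ext_getElem (by simp) fun i _ hi => ?_
  simp [hf, List.getElem?_eq_getElem hi]

theorem exists_primeExponents_eq (l : List ℕ) (ha : a ≠ 0) :
    ∃ n, 2 ≤ n ∧ primeExponents n = l ++ [a] := by
  set e := (l ++ [a]).toFinsupp.mapDomain (nth Nat.Prime)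
  have he : ∀ p ∈ e.support, p.Prime := fun p hp => by
    obtain ⟨i, -, rfl⟩ := Finset.mem_image.mp (Finsupp.mapDomain_support hp)
    exact prime_nth_prime i
  have hf : ∀ i, (e.prod (· ^ ·)).factorization (nth Nat.Prime i) = (l ++ [a]).getD i 0 := by
    intro i
    rw [prod_pow_factorization_eq_self he,
      Finsupp.mapDomain_apply (nth_injective infinite_setOfPred_prime), List.toFinsupp_apply]
  refine ⟨e.prod (· ^ ·), ?_, primeExponents_eq_of_factorization ha hf⟩
  by_contra! h
  have := hf l.length
  rw [(factorization_eq_zero_iff' _).mpr (by omega)] at this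
  simp [ha.symm] at this

end Exponents

noncomputable def spell (l : List ℕ) : List Bool :=
  (l.map fun a => true :: gamma a ++ [false]).flatten

@[simp]
theorem spell_cons (a : ℕ) (l : List ℕ) :
    spell (a :: l) = true :: gamma a ++ false :: spell l := by
  simp [spell]

theorem gamma_zero : gamma 0 = [] := by rw [gamma]

theorem gamma_one : gamma 1 = [true, false] := by rw [gamma]

theorem gamma_eq_spell {n : ℕ} (hn : 2 ≤ n) : gamma n = spell (primeExponents n) := by
  obtain ⟨m, rfl⟩ := Nat.exists_eq_add_of_le' hn
  rw [gamma, spell, primeExponents, List.map_map]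
  rfl

theorem gamma_ne_nil {n : ℕ} (hn : n ≠ 0) : gamma n ≠ [] := by
  obtain rfl | hn := (Nat.one_le_iff_ne_zero.mpr hn).eq_or_lt
  · simp [gamma_one]
  · obtain ⟨l, a, -, hl⟩ := primeExponents_eq_append hn
    simp [gamma_eq_spell hn, hl, spell]

theorem spell_append_singleton_ne {l : List ℕ} {a : ℕ} (ha : a ≠ 0) :
    spell (l ++ [a]) ≠ [true, false] := by
  intro h
  have hlen := congrArg List.length h
  simp only [spell, List.map_append, List.flatten_append, List.length_append, List.map_cons,
    List.map_nil, List.flatten_cons, List.flatten_nil, List.append_nil, List.length_cons,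
    List.length_nil] at hlen
  exact gamma_ne_nil ha (List.length_eq_zero_iff.mp (by omega))

theorem isSpelling_spell {l : List ℕ} {a : ℕ} (hl : ∀ b ∈ l ++ [a], IsSpelling (gamma b))
    (ha : a ≠ 0) : IsSpelling (spell (l ++ [a])) := by
  induction l with
  | nil => simpa [spell] using IsSpelling.node (hl a (by simp)) .nil (by simp)
  | cons b l ih =>
    rw [List.cons_append, spell_cons]
    exact .node (hl b (by simp)) (ih fun c hc => hl c (by simp_all))
      (spell_append_singleton_ne ha)

theorem isSpelling_gamma (n : ℕ) : IsSpelling (gamma n) := by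
  induction n using Nat.strong_induction_on with
  | _ n ih =>
  match n, ih with
  | 0, _ => simpa [gamma_zero] using IsSpelling.nil
  | 1, _ => simpa [gamma_one] using IsSpelling.node .nil .nil (by simp)
  | n + 2, ih =>
    obtain ⟨l, a, ha, hl⟩ := primeExponents_eq_append (Nat.le_add_left 2 n)
    rw [gamma_eq_spell (Nat.le_add_left 2 n), hl]
    exact isSpelling_spell (fun b hb => ih b (lt_of_mem_primeExponents (by omega) (hl ▸ hb))) ha

theorem exists_gamma_eq_node (a : ℕ) {m : ℕ} (hm : m ≠ 1) :
    ∃ n, gamma n = true :: gamma a ++ false :: gamma m := by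
  obtain rfl | hm := m.eq_zero_or_pos
  · obtain rfl | ha := eq_or_ne a 0
    · exact ⟨1, by simp [gamma_zero, gamma_one]⟩
    · obtain ⟨n, hn, hl⟩ := exists_primeExponents_eq [] ha
      exact ⟨n, by simp [gamma_eq_spell hn, hl, gamma_zero, spell]⟩
  · have hm : 2 ≤ m := by omega
    obtain ⟨l, b, hb, hlm⟩ := primeExponents_eq_append hm
    obtain ⟨n, hn, hl⟩ := exists_primeExponents_eq (a :: l) hb
    exact ⟨n, by rw [gamma_eq_spell hn, hl, gamma_eq_spell hm, hlm, List.cons_append, spell_cons]⟩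

theorem mem_range_gamma_iff {w : List Bool} : w ∈ Set.range gamma ↔ IsSpelling w := by
  refine ⟨fun ⟨n, hn⟩ => hn ▸ isSpelling_gamma n, fun h => ?_⟩
  induction h with
  | nil => exact ⟨0, gamma_zero⟩
  | node _ _ hne ihx ihy =>
    obtain ⟨⟨a, rfl⟩, ⟨m, rfl⟩⟩ := And.intro ihx ihy
    exact exists_gamma_eq_node a (by rintro rfl; exact hne gamma_one)

/-- A Dyck word `w` lies in the image of `γ` iff ")())" (encoded as
`[false,true,false,false]`) is not an infix of `w` and ")()" (`[false,true,false]`)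
is not a suffix of `w`. -/
theorem gamma_range_characterization (w : List Bool) (hw : IsDyck w) :
    w ∈ Set.range gamma ↔
      ¬ ([false, true, false, false] <:+: w) ∧ ¬ ([false, true, false] <:+ w) := by
  rw [mem_range_gamma_iff, isSpelling_iff_isBalanced_and_avoidsPatterns]
  exact and_iff_right hw.isBalanced
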